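/- Let (Ω, ℱ, ℙ) be a probability space and let (G_k)_{k≥0} and (H_k)_{k≥0} be nonnegative real-valued random variables with each H_k and each G_k square-integrable. Let N ≥ 1, ς ≥ 0, Γ > 0, γ ∈ (0,1), K₁ > 0 be constants, let ε satisfy 0 < ε < (1−γ)/(2√3·NΓγ), and let (α_k)_{k≥0} be a positive non-increasing real sequence. Assume: (i) almost surely, for all k ≥ 1, G_k ≤ 4N²ςεΓγ^k + α_k H_k + 2NεΓ Σ_{r=1}^{k−1} γ^{k−r} G_{r−1}; and (ii) E[H_k²] ≤ N²K₁² for all k. Then there exist constants Φ₃ > 0 and Ψ₃ > 0 (independent of K) such that for every K ≥ 1: Σ_{k=1}^{K} α_k E[H_k G_k] ≤ Φ₃ Σ_{k=1}^{K} α_k² + Ψ₃. -/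

import Mathlib

/-!
Taking `L²(ℙ)`-norms in the pathwise recursion (Minkowski) turns it into the deterministic
recursion `g k ≤ A γ^k + α k N K₁ + c ∑_{r<k} γ^(k-r) g (r-1)` for `g k = ‖G k‖₂`, where
`A = 4N²ςεΓ`, `c = 2NεΓ`; Cauchy–Schwarz gives `E[H k G k] ≤ N K₁ g k`. Multiplying by `α k` and
summing, monotonicity of `α` moves `α k` onto `g (r-1)` inside the convolution, and summing the
geometric kernel gives `∑ α k g k ≤ const + N K₁ ∑ α k² + q (α 0 g 0 + ∑ α k g k)` with
`q = cγ/(1-γ)`. The bound on `ε` gives `q < 1`, so the last term is absorbed.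
-/

open MeasureTheory Finset

section L2

variable {Ω : Type*} [MeasurableSpace Ω] {μ : Measure Ω}

lemma integral_mul_eq_inner_toLp {f g : Ω → ℝ} (hf : MemLp f 2 μ) (hg : MemLp g 2 μ) :
    ∫ ω, f ω * g ω ∂μ = inner ℝ (hf.toLp f) (hg.toLp g) := by
  rw [L2.inner_def]
  refine integral_congr_ae ?_
  filter_upwards [hf.coeFn_toLp, hg.coeFn_toLp] with ω hfω hgω
  simp [hfω, hgω, mul_comm]

lemma lpNorm_two_sq {f : Ω → ℝ} (hf : MemLp f 2 μ) :
    lpNorm f 2 μ ^ 2 = ∫ ω, f ω ^ 2 ∂μ := by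
  simp only [sq, integral_mul_eq_inner_toLp hf hf, real_inner_self_eq_norm_mul_norm,
    Lp.norm_toLp, toReal_eLpNorm hf.1]

lemma integral_mul_le_lpNorm_mul_lpNorm {f g : Ω → ℝ} (hf : MemLp f 2 μ) (hg : MemLp g 2 μ) :
    ∫ ω, f ω * g ω ∂μ ≤ lpNorm f 2 μ * lpNorm g 2 μ := by
  rw [integral_mul_eq_inner_toLp hf hg, ← toReal_eLpNorm hf.1, ← toReal_eLpNorm hg.1,
    ← Lp.norm_toLp, ← Lp.norm_toLp]
  exact real_inner_le_norm _ _

lemma lpNorm_mono_ae_real {E : Type*} [NormedAddCommGroup E] {p : ENNReal} {f : Ω → E}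
    {g : Ω → ℝ} (hg : MemLp g p μ) (h : ∀ᵐ x ∂μ, ‖f x‖ ≤ g x) :
    lpNorm f p μ ≤ lpNorm g p μ := by
  by_cases hf : AEStronglyMeasurable f μ
  · rw [← toReal_eLpNorm hf, ← toReal_eLpNorm hg.aestronglyMeasurable]
    exact ENNReal.toReal_mono hg.eLpNorm_ne_top (eLpNorm_mono_ae_real h)
  · simp [hf]

lemma lpNorm_le_of_ae_le_const_add_mul_add_sum [IsProbabilityMeasure μ] {p : ENNReal}
    (hp : 1 ≤ p) {ι : Type*} {s : Finset ι} {f h : Ω → ℝ} {F : ι → Ω → ℝ} {a β : ℝ}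
    {w : ι → ℝ} (ha : 0 ≤ a) (hβ : 0 ≤ β) (hw : ∀ i ∈ s, 0 ≤ w i) (hh : MemLp h p μ)
    (hF : ∀ i ∈ s, MemLp (F i) p μ) (hf0 : ∀ᵐ x ∂μ, 0 ≤ f x)
    (hf : ∀ᵐ x ∂μ, f x ≤ a + β * h x + ∑ i ∈ s, w i * F i x) :
    lpNorm f p μ ≤ a + β * lpNorm h p μ + ∑ i ∈ s, w i * lpNorm (F i) p μ := by
  have hp0 : p ≠ 0 := (zero_lt_one.trans_le hp).ne'
  have hwF : ∀ i ∈ s, MemLp (w i • F i) p μ := fun i hi => (hF i hi).const_smul _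
  have hsum : MemLp (∑ i ∈ s, w i • F i) p μ := memLp_finsetSum' s hwF
  calc lpNorm f p μ ≤ lpNorm ((fun _ => a) + β • h + ∑ i ∈ s, w i • F i) p μ := by
        refine lpNorm_mono_ae_real (((memLp_const a).add (hh.const_smul β)).add hsum) ?_
        filter_upwards [hf0, hf] with x hx0 hx
        simpa [Real.norm_eq_abs, abs_of_nonneg hx0, Finset.sum_apply] using hx
    _ ≤ lpNorm (fun _ => a) p μ + lpNorm (β • h) p μ + lpNorm (∑ i ∈ s, w i • F i) p μ := by
        grw [lpNorm_add_le ((memLp_const a).add (hh.const_smul β)) hp,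
          lpNorm_add_le (memLp_const a) hp]
    _ ≤ a + β * lpNorm h p μ + ∑ i ∈ s, w i * lpNorm (F i) p μ := by
        grw [lpNorm_sum_le hwF hp]
        rw [lpNorm_const hp0 (IsProbabilityMeasure.ne_zero μ)]
        simp only [lpNorm_const_smul, Real.norm_eq_abs, probReal_univ, Real.one_rpow,
          mul_one, abs_of_nonneg ha, coe_nnnorm, abs_of_nonneg hβ]
        gcongr with i hi
        exacts [lpNorm_nonneg, (abs_of_nonneg (hw i hi)).le]

lemma sum_mul_integral_mul_le {G H : ℕ → Ω → ℝ} {α : ℕ → ℝ} {b : ℝ} (hα : ∀ k, 0 ≤ α k)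
    (hH : ∀ k, MemLp (H k) 2 μ) (hG : ∀ k, MemLp (G k) 2 μ) (hHb : ∀ k, lpNorm (H k) 2 μ ≤ b)
    (s : Finset ℕ) :
    ∑ k ∈ s, α k * ∫ ω, H k ω * G k ω ∂μ ≤ b * ∑ k ∈ s, α k * lpNorm (G k) 2 μ := by
  rw [mul_sum]
  refine sum_le_sum fun k _ => ?_
  rw [mul_left_comm]
  exact mul_le_mul_of_nonneg_left ((integral_mul_le_lpNorm_mul_lpNorm (hH k) (hG k)).trans
    (mul_le_mul_of_nonneg_right (hHb k) lpNorm_nonneg)) (hα k)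

lemma lpNorm_two_le_of_integral_sq_le {f : Ω → ℝ} (hf : MemLp f 2 μ) {b : ℝ} (hb : 0 ≤ b)
    (h : ∫ ω, f ω ^ 2 ∂μ ≤ b ^ 2) : lpNorm f 2 μ ≤ b :=
  (pow_le_pow_iff_left₀ lpNorm_nonneg hb two_ne_zero).1 ((lpNorm_two_sq hf).trans_le h)

lemma lpNorm_le_geom_conv_of_ae_le [IsProbabilityMeasure μ] {p : ENNReal} (hp : 1 ≤ p)
    {G H : ℕ → Ω → ℝ} {α : ℕ → ℝ} {A b c γ : ℝ} (hA : 0 ≤ A) (hc : 0 ≤ c) (hγ : 0 ≤ γ)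
    (hα : ∀ k, 0 ≤ α k) (hG0 : ∀ k ω, 0 ≤ G k ω) (hH : ∀ k, MemLp (H k) p μ)
    (hG : ∀ k, MemLp (G k) p μ) (hHb : ∀ k, lpNorm (H k) p μ ≤ b)
    (hrec : ∀ᵐ ω ∂μ, ∀ k : ℕ, 1 ≤ k →
      G k ω ≤ A * γ ^ k + α k * H k ω + c * ∑ r ∈ Icc 1 (k - 1), γ ^ (k - r) * G (r - 1) ω)
    {k : ℕ} (hk : 1 ≤ k) :
    lpNorm (G k) p μ ≤ A * γ ^ k + α k * b
      + c * ∑ r ∈ Icc 1 (k - 1), γ ^ (k - r) * lpNorm (G (r - 1)) p μ := by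
  calc lpNorm (G k) p μ ≤ A * γ ^ k + α k * lpNorm (H k) p μ
        + ∑ r ∈ Icc 1 (k - 1), c * γ ^ (k - r) * lpNorm (G (r - 1)) p μ := by
        refine lpNorm_le_of_ae_le_const_add_mul_add_sum hp (by positivity) (hα k)
          (fun r _ => by positivity) (hH k) (fun r _ => hG (r - 1)) (ae_of_all _ (hG0 k)) ?_
        filter_upwards [hrec] with ω hω
        simpa only [mul_sum, mul_assoc] using hω k hk
    _ ≤ A * γ ^ k + α k * b + c * ∑ r ∈ Icc 1 (k - 1), γ ^ (k - r) * lpNorm (G (r - 1)) p μ := by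
        simp only [mul_sum, mul_assoc]
        gcongr
        exacts [hα k, hHb k]

end L2

lemma sum_Icc_pow_sub_le {γ : ℝ} (hγ0 : 0 ≤ γ) (hγ1 : γ < 1) (r K : ℕ) :
    ∑ k ∈ Icc (r + 1) K, γ ^ (k - r) ≤ γ / (1 - γ) := by
  rw [← Ico_add_one_right_eq_Icc, sum_Ico_eq_sum_range]
  calc ∑ i ∈ range (K + 1 - (r + 1)), γ ^ (r + 1 + i - r)
      = ∑ i ∈ Ico 1 (K + 1 - (r + 1) + 1), γ ^ i := by
        rw [range_eq_Ico, ← sum_Ico_add' _ 0 _ 1]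
        exact sum_congr rfl fun i _ => by congr 1; omega
    _ ≤ γ ^ 1 / (1 - γ) := geom_sum_Ico_le_of_lt_one hγ0 hγ1
    _ = γ / (1 - γ) := by rw [pow_one]

lemma sum_range_le_add_sum_Icc {x : ℕ → ℝ} (hx : ∀ j, 0 ≤ x j) (K : ℕ) :
    ∑ j ∈ range K, x j ≤ x 0 + ∑ j ∈ Icc 1 K, x j := by
  rw [← sum_insert (by simp)]
  exact sum_le_sum_of_subset_of_nonneg (fun j hj => by simp at hj ⊢; omega)
    fun j _ _ => hx j

lemma sum_Icc_sum_geom_conv_le {γ : ℝ} (hγ0 : 0 ≤ γ) (hγ1 : γ < 1) {x : ℕ → ℝ} (hx : ∀ j, 0 ≤ x j)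
    (K : ℕ) :
    ∑ k ∈ Icc 1 K, ∑ r ∈ Icc 1 (k - 1), γ ^ (k - r) * x (r - 1)
      ≤ γ / (1 - γ) * ∑ j ∈ range K, x j := by
  calc ∑ k ∈ Icc 1 K, ∑ r ∈ Icc 1 (k - 1), γ ^ (k - r) * x (r - 1)
      = ∑ r ∈ Icc 1 K, (∑ k ∈ Icc (r + 1) K, γ ^ (k - r)) * x (r - 1) := by
        simp_rw [sum_mul]
        exact sum_comm' fun k r => by simp only [mem_Icc]; omega
    _ ≤ ∑ r ∈ Icc 1 K, γ / (1 - γ) * x (r - 1) :=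
        sum_le_sum fun r _ => mul_le_mul_of_nonneg_right (sum_Icc_pow_sub_le hγ0 hγ1 r K) (hx _)
    _ = γ / (1 - γ) * ∑ j ∈ range K, x j := by
        rw [← mul_sum, ← Ico_add_one_right_eq_Icc, sum_Ico_eq_sum_range]
        simp

theorem sum_mul_le_of_le_geom_conv {γ A b c : ℝ} {α g : ℕ → ℝ} (hγ0 : 0 ≤ γ) (hγ1 : γ < 1)
    (hA : 0 ≤ A) (hc : 0 ≤ c) (hα0 : ∀ k, 0 ≤ α k) (hα : Antitone α) (hg : ∀ k, 0 ≤ g k)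
    (hrec : ∀ k, 1 ≤ k →
      g k ≤ A * γ ^ k + α k * b + c * ∑ r ∈ Icc 1 (k - 1), γ ^ (k - r) * g (r - 1))
    (K : ℕ) :
    ∑ k ∈ Icc 1 K, α k * g k ≤ A * α 0 * (γ / (1 - γ)) + b * ∑ k ∈ Icc 1 K, α k ^ 2
      + c * (γ / (1 - γ)) * (α 0 * g 0 + ∑ k ∈ Icc 1 K, α k * g k) := by
  have hq : 0 ≤ γ / (1 - γ) := div_nonneg hγ0 (by linarith)
  have hαg : ∀ j, 0 ≤ α j * g j := fun j => mul_nonneg (hα0 j) (hg j)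
  have hdet : ∑ k ∈ Icc 1 K, α k * (A * γ ^ k) ≤ A * α 0 * (γ / (1 - γ)) := by
    calc ∑ k ∈ Icc 1 K, α k * (A * γ ^ k) ≤ ∑ k ∈ Icc 1 K, A * α 0 * γ ^ (k - 0) :=
          sum_le_sum fun k _ => by
            rw [Nat.sub_zero, ← mul_assoc, mul_comm A]
            gcongr
            exacts [hα (Nat.zero_le k)]
      _ ≤ A * α 0 * (γ / (1 - γ)) := by
          rw [← mul_sum]; gcongr; exacts [mul_nonneg hA (hα0 0), sum_Icc_pow_sub_le hγ0 hγ1 0 K]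
  have hconv : ∑ k ∈ Icc 1 K, α k * ∑ r ∈ Icc 1 (k - 1), γ ^ (k - r) * g (r - 1)
      ≤ γ / (1 - γ) * (α 0 * g 0 + ∑ k ∈ Icc 1 K, α k * g k) := by
    calc ∑ k ∈ Icc 1 K, α k * ∑ r ∈ Icc 1 (k - 1), γ ^ (k - r) * g (r - 1)
        ≤ ∑ k ∈ Icc 1 K, ∑ r ∈ Icc 1 (k - 1), γ ^ (k - r) * (α (r - 1) * g (r - 1)) := by
          refine sum_le_sum fun k _ => ?_
          rw [mul_sum]
          refine sum_le_sum fun r hr => ?_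
          rw [mul_left_comm]
          gcongr
          exacts [hg _, hα (by simp only [mem_Icc] at hr; omega)]
      _ ≤ γ / (1 - γ) * ∑ j ∈ range K, α j * g j := sum_Icc_sum_geom_conv_le hγ0 hγ1 hαg K
      _ ≤ γ / (1 - γ) * (α 0 * g 0 + ∑ k ∈ Icc 1 K, α k * g k) :=
          mul_le_mul_of_nonneg_left (sum_range_le_add_sum_Icc hαg K) hq
  calc ∑ k ∈ Icc 1 K, α k * g k
      ≤ ∑ k ∈ Icc 1 K, α k * (A * γ ^ k + α k * b
          + c * ∑ r ∈ Icc 1 (k - 1), γ ^ (k - r) * g (r - 1)) :=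
        sum_le_sum fun k hk => mul_le_mul_of_nonneg_left (hrec k (mem_Icc.1 hk).1) (hα0 k)
    _ = ∑ k ∈ Icc 1 K, α k * (A * γ ^ k) + b * ∑ k ∈ Icc 1 K, α k ^ 2
          + c * ∑ k ∈ Icc 1 K, α k * ∑ r ∈ Icc 1 (k - 1), γ ^ (k - r) * g (r - 1) := by
        rw [mul_sum, mul_sum, ← sum_add_distrib, ← sum_add_distrib]
        exact sum_congr rfl fun k _ => by ring
    _ ≤ _ := by
        grw [hdet, hconv]
        exact le_of_eq (by ring)

lemma two_mul_mul_mul_mul_div_one_sub_lt_one {N Γ γ ε : ℝ} (hN : 0 < N) (hΓ : 0 < Γ)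
    (hγ0 : 0 < γ) (hγ1 : γ < 1) (hε : ε < (1 - γ) / (2 * Real.sqrt 3 * N * Γ * γ)) :
    2 * N * ε * Γ * (γ / (1 - γ)) < 1 := by
  have hs3 : 1 ≤ Real.sqrt 3 := Real.one_le_sqrt.2 (by norm_num)
  have hε' := (lt_div_iff₀ (by positivity)).1 hε
  rw [← mul_div_assoc, div_lt_one (by linarith)]
  nlinarith [mul_le_mul_of_nonneg_right hs3 (by positivity : 0 ≤ 2 * N * Γ * γ)]

theorem stmt_6_general {Ω : Type*} [MeasurableSpace Ω] (ℙ : Measure Ω) [IsProbabilityMeasure ℙ]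
    (G H : ℕ → Ω → ℝ)
    (hGnn : ∀ k ω, 0 ≤ G k ω)
    (hHL2 : ∀ k, MemLp (H k) 2 ℙ) (hGL2 : ∀ k, MemLp (G k) 2 ℙ)
    (N ς Γ γ K₁ ε : ℝ) (hN : 1 ≤ N) (hς : 0 ≤ ς) (hΓ : 0 < Γ)
    (hγ : γ ∈ Set.Ioo (0 : ℝ) 1) (hK₁ : 0 < K₁)
    (hε : 0 < ε) (hε' : ε < (1 - γ) / (2 * Real.sqrt 3 * N * Γ * γ))
    (α : ℕ → ℝ) (hαpos : ∀ k, 0 < α k) (hαmono : ∀ k, α (k + 1) ≤ α k)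
    (hrec : ∀ᵐ ω ∂ℙ, ∀ k : ℕ, 1 ≤ k →
      G k ω ≤ 4 * N ^ 2 * ς * ε * Γ * γ ^ k + α k * H k ω
        + 2 * N * ε * Γ * ∑ r ∈ Icc 1 (k - 1), γ ^ (k - r) * G (r - 1) ω)
    (hH2 : ∀ k, ∫ ω, (H k ω) ^ 2 ∂ℙ ≤ N ^ 2 * K₁ ^ 2) :
    ∃ Φ₃ > (0 : ℝ), ∃ Ψ₃ > (0 : ℝ), ∀ K : ℕ, 1 ≤ K →
      ∑ k ∈ Icc 1 K, α k * ∫ ω, H k ω * G k ω ∂ℙ ≤ Φ₃ * ∑ k ∈ Icc 1 K, (α k) ^ 2 + Ψ₃ := by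
  obtain ⟨hγ0, hγ1⟩ := hγ
  have hq := two_mul_mul_mul_mul_div_one_sub_lt_one (by positivity) hΓ hγ0 hγ1 hε'
  set q := 2 * N * ε * Γ * (γ / (1 - γ))
  have h1q : 0 < 1 - q := sub_pos.2 hq
  have hHb : ∀ k, lpNorm (H k) 2 ℙ ≤ N * K₁ := fun k =>
    lpNorm_two_le_of_integral_sq_le (hHL2 k) (by positivity) ((hH2 k).trans_eq (mul_pow N K₁ 2).symm)
  have hS := sum_mul_le_of_le_geom_conv hγ0.le hγ1 (by positivity) (by positivity)
    (fun k => (hαpos k).le) (antitone_nat_of_succ_le hαmono) (fun k => lpNorm_nonneg)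
    (fun _ => lpNorm_le_geom_conv_of_ae_le one_le_two (by positivity) (by positivity) hγ0.le
      (fun k => (hαpos k).le) hGnn hHL2 hGL2 hHb hrec)
  set P := 4 * N ^ 2 * ς * ε * Γ * α 0 * (γ / (1 - γ)) + q * (α 0 * lpNorm (G 0) 2 ℙ)
  refine ⟨(N * K₁) ^ 2 / (1 - q), div_pos (by positivity) h1q, |N * K₁ * P / (1 - q)| + 1,
    by positivity, fun K _ => ?_⟩
  calc ∑ k ∈ Icc 1 K, α k * ∫ ω, H k ω * G k ω ∂ℙ
      ≤ N * K₁ * ∑ k ∈ Icc 1 K, α k * lpNorm (G k) 2 ℙ :=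
        sum_mul_integral_mul_le (fun k => (hαpos k).le) hHL2 hGL2 hHb _
    _ ≤ N * K₁ * ((P + N * K₁ * ∑ k ∈ Icc 1 K, α k ^ 2) / (1 - q)) := by
        gcongr
        rw [le_div_iff₀ h1q]
        linarith [hS K]
    _ = (N * K₁) ^ 2 / (1 - q) * ∑ k ∈ Icc 1 K, α k ^ 2 + N * K₁ * P / (1 - q) := by ring
    _ ≤ (N * K₁) ^ 2 / (1 - q) * ∑ k ∈ Icc 1 K, α k ^ 2 + (|N * K₁ * P / (1 - q)| + 1) := by
        linarith [le_abs_self (N * K₁ * P / (1 - q))]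

/-- Lemma 4-(3): `Σ_{k=1}^K α_k E[H_k G_k] ≤ Φ₃ Σ_{k=1}^K α_k² + Ψ₃`. -/
theorem stmt_6 {Ω : Type*} [MeasurableSpace Ω] (ℙ : Measure Ω) [IsProbabilityMeasure ℙ]
    (G H : ℕ → Ω → ℝ)
    (hGnn : ∀ k ω, 0 ≤ G k ω) (hHnn : ∀ k ω, 0 ≤ H k ω)
    (hHL2 : ∀ k, MemLp (H k) 2 ℙ) (hGL2 : ∀ k, MemLp (G k) 2 ℙ)
    (N ς Γ γ K₁ ε : ℝ) (hN : 1 ≤ N) (hς : 0 ≤ ς) (hΓ : 0 < Γ)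
    (hγ : γ ∈ Set.Ioo (0 : ℝ) 1) (hK₁ : 0 < K₁)
    (hε : 0 < ε) (hε' : ε < (1 - γ) / (2 * Real.sqrt 3 * N * Γ * γ))
    (α : ℕ → ℝ) (hαpos : ∀ k, 0 < α k) (hαmono : ∀ k, α (k + 1) ≤ α k)
    (hrec : ∀ᵐ ω ∂ℙ, ∀ k : ℕ, 1 ≤ k →
      G k ω ≤ 4 * N ^ 2 * ς * ε * Γ * γ ^ k + α k * H k ω
        + 2 * N * ε * Γ * ∑ r ∈ Icc 1 (k - 1), γ ^ (k - r) * G (r - 1) ω)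
    (hH2 : ∀ k, ∫ ω, (H k ω) ^ 2 ∂ℙ ≤ N ^ 2 * K₁ ^ 2) :
    ∃ Φ₃ > (0 : ℝ), ∃ Ψ₃ > (0 : ℝ), ∀ K : ℕ, 1 ≤ K →
      ∑ k ∈ Icc 1 K, α k * ∫ ω, H k ω * G k ω ∂ℙ ≤ Φ₃ * ∑ k ∈ Icc 1 K, (α k) ^ 2 + Ψ₃ :=
  stmt_6_general ℙ G H hGnn hHL2 hGL2 N ς Γ γ K₁ ε hN hς hΓ hγ hK₁ hε hε' α hαpos hαmono hrec hH2
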